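/- arXiv:2201.11183 — 7 statements merged into one kernel-verified Lean document; each statement's English description precedes it below -/
import Mathlib

section
/- Let L = diag(L_1,…,L_n) with L_i > 0 and fix τ with 2 ≤ τ ≤ n. Sample a random subset I of [n] with |I| = τ according to the distribution P(I) = (e_Iᵀ L⁻¹ e_I) / Σ_{J: |J|=τ} (e_Jᵀ L⁻¹ e_J). Then 𝔼_I[P_I] = ((τ−1)/(n−1)) P_{[n]}, where P_I = 𝕀_I − (1/(e_Iᵀ L⁻¹ e_I)) L⁻¹ e_I e_Iᵀ. -/
/-!
Write `w = L⁻¹` and `c I = ∑ i ∈ I, w i = e_Iᵀ L⁻¹ e_I`. Since `p I ∝ c I`, the expectation is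
`(∑_I c I • P_I) / ∑_J c J`, and `c I • P_I = c I • diag e_I - (w ⊙ e_I) e_Iᵀ` has entries that are
sums of products of two indicators of `I`. Double counting over the `τ`-subsets, with
`#{I ∋ i, j} = C(n-1, τ-1)` or `C(n-2, τ-2)` according as `i = j` or not, gives
`∑_I c I • P_I = C(n-2, τ-2) • c [n] • P_[n]` and `∑_J c J = C(n-1, τ-1) * c [n]`;
finally `C(n-2, τ-2) / C(n-1, τ-1) = (τ-1)/(n-1)`.
-/

open Matrix Finset

section

variable {α : Type*} [DecidableEq α]

/-- The matrix `P_I` of the statement, for the weights `w = L⁻¹`. -/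
noncomputable def weightedProj (w : α → ℝ) (I : Finset α) : Matrix α α ℝ :=
  diagonal (fun i => if i ∈ I then 1 else 0) -
    (∑ k ∈ I, w k)⁻¹ •
      vecMulVec (fun i => w i * if i ∈ I then 1 else 0) (fun i => if i ∈ I then 1 else 0)

theorem smul_weightedProj_apply {w : α → ℝ} {I : Finset α} (hI : ∑ k ∈ I, w k ≠ 0) (i j : α) :
    ((∑ k ∈ I, w k) • weightedProj w I) i j =
      (if i = j ∧ i ∈ I then ∑ k ∈ I, w k else 0) - if i ∈ I ∧ j ∈ I then w i else 0 := by
  simp only [weightedProj, Matrix.sub_apply, Matrix.smul_apply, diagonal_apply, vecMulVec_apply,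
    smul_eq_mul]
  by_cases hi : i ∈ I <;> by_cases hj : j ∈ I <;> by_cases hij : i = j <;> simp [hi, hj, hij] <;>
    field_simp

variable [Fintype α]

theorem sum_sum_mem_eq_sum_card_filter_smul {M : Type*} [AddCommMonoid M]
    (𝒜 : Finset (Finset α)) (f : α → M) :
    ∑ I ∈ 𝒜, ∑ k ∈ I, f k = ∑ k, #{I ∈ 𝒜 | k ∈ I} • f k := by
  rw [sum_comm' (t' := univ) (s' := fun k => {I ∈ 𝒜 | k ∈ I}) (by simp)]
  simp only [sum_const]

theorem card_filter_mem_powersetCard {τ : ℕ} (hτ : 1 ≤ τ) (i : α) :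
    #{I ∈ powersetCard τ univ | i ∈ I} = (Fintype.card α - 1).choose (τ - 1) := by
  simpa using card_filter_powersetCard_subset {i} univ τ (subset_univ _) (by simpa using hτ)

theorem card_filter_mem_and_mem_powersetCard {τ : ℕ} (hτ : 2 ≤ τ) (i j : α) :
    #{I ∈ powersetCard τ univ | i ∈ I ∧ j ∈ I} =
      if i = j then (Fintype.card α - 1).choose (τ - 1)
      else (Fintype.card α - 2).choose (τ - 2) := by
  split_ifs with hij
  · subst hij
    simpa using card_filter_mem_powersetCard (by omega) i
  · have h := card_filter_powersetCard_subset {i, j} univ τ (subset_univ _)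
      (by rw [card_pair hij]; exact hτ)
    simpa [card_pair hij, insert_subset_iff] using h

theorem sum_powersetCard_sum {M : Type*} [AddCommMonoid M] {τ : ℕ} (hτ : 1 ≤ τ) (f : α → M) :
    ∑ I ∈ powersetCard τ univ, ∑ k ∈ I, f k =
      (Fintype.card α - 1).choose (τ - 1) • ∑ k, f k := by
  simp only [sum_sum_mem_eq_sum_card_filter_smul, card_filter_mem_powersetCard hτ, smul_sum]

theorem sum_filter_mem_powersetCard_sum {M : Type*} [AddCommMonoid M] {τ : ℕ} (hτ : 2 ≤ τ)
    (f : α → M) (i : α) :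
    ∑ I ∈ powersetCard τ univ with i ∈ I, ∑ k ∈ I, f k =
      (Fintype.card α - 1).choose (τ - 1) • f i +
        (Fintype.card α - 2).choose (τ - 2) • ∑ k ∈ univ.erase i, f k := by
  rw [sum_sum_mem_eq_sum_card_filter_smul, ← add_sum_erase _ _ (mem_univ i)]
  simp only [filter_filter, card_filter_mem_and_mem_powersetCard hτ, smul_sum]
  rw [if_pos trivial]
  exact congrArg _ (sum_congr rfl fun k hk => by rw [if_neg (ne_of_mem_erase hk).symm])

theorem sum_powersetCard_smul_weightedProj {τ : ℕ} (hτ : 2 ≤ τ) {w : α → ℝ} (hw : ∀ i, 0 < w i) :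
    ∑ I ∈ powersetCard τ univ, (∑ k ∈ I, w k) • weightedProj w I =
      ((Fintype.card α - 2).choose (τ - 2) : ℝ) • (∑ k, w k) • weightedProj w univ := by
  have hne : ∀ I : Finset α, I.Nonempty → ∑ k ∈ I, w k ≠ 0 := fun I hI =>
    (sum_pos (fun k _ => hw k) hI).ne'
  have hτne : ∀ I ∈ powersetCard τ (univ : Finset α), I.Nonempty := fun I hI =>
    card_pos.1 (by rw [(mem_powersetCard.1 hI).2]; omega)
  ext i j
  rw [Matrix.sum_apply, Matrix.smul_apply,
    sum_congr rfl fun I hI => smul_weightedProj_apply (hne I (hτne I hI)) i j,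
    smul_weightedProj_apply (hne univ ⟨i, mem_univ i⟩), sum_sub_distrib]
  rcases eq_or_ne i j with rfl | hij
  · simp only [true_and, and_self, mem_univ, if_true]
    rw [← sum_filter, ← sum_filter, sum_filter_mem_powersetCard_sum hτ, sum_const,
      card_filter_mem_powersetCard (by omega), ← add_sum_erase _ _ (mem_univ i)]
    simp only [nsmul_eq_mul, smul_eq_mul]
    ring
  · simp only [hij, false_and, if_false, sum_const_zero, zero_sub, mem_univ, and_self, if_true]
    rw [← sum_filter, sum_const, card_filter_mem_and_mem_powersetCard hτ, if_neg hij,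
      nsmul_eq_mul, smul_eq_mul, mul_neg]

end

theorem cast_choose_div_cast_choose_add_one {K : Type*} [Field K] [CharZero K] {m k : ℕ}
    (hkm : k ≤ m) :
    (m.choose k : K) / (m + 1).choose (k + 1) = (k + 1) / (m + 1) := by
  have h : ((m + 1 : ℕ) : K) * m.choose k = (m + 1).choose (k + 1) * (k + 1 : ℕ) := by
    exact_mod_cast Nat.add_one_mul_choose_eq m k
  have hN : ((m + 1).choose (k + 1) : K) ≠ 0 := by
    exact_mod_cast (Nat.choose_pos (by omega)).ne'
  push_cast at h
  rw [div_eq_div_iff hN (Nat.cast_add_one_ne_zero m)]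
  linear_combination h

/-- Under the sampling distribution `P(I) ∝ e_Iᵀ L⁻¹ e_I` over subsets of
cardinality τ, the expectation of `P_I` equals `((τ−1)/(n−1)) P_{[n]}`. -/
theorem stmt3 {n : ℕ} (τ : ℕ) (hτ : 2 ≤ τ) (hτn : τ ≤ n)
    (L : Fin n → ℝ) (hL : ∀ i, 0 < L i) :
    let eI : Finset (Fin n) → (Fin n → ℝ) := fun I i => if i ∈ I then 1 else 0
    let c : Finset (Fin n) → ℝ := fun I => ∑ i ∈ I, (L i)⁻¹
    let P : Finset (Fin n) → Matrix (Fin n) (Fin n) ℝ := fun I =>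
      Matrix.diagonal (eI I) -
        (c I)⁻¹ • Matrix.vecMulVec (fun i => (L i)⁻¹ * eI I i) (eI I)
    let Psets := Finset.powersetCard τ (Finset.univ : Finset (Fin n))
    let p : Finset (Fin n) → ℝ := fun I => c I / ∑ J ∈ Psets, c J
    ∑ I ∈ Psets, p I • P I = (((τ : ℝ) - 1) / ((n : ℝ) - 1)) • P Finset.univ := by
  intro eI c P Psets p
  obtain ⟨m, rfl⟩ := Nat.exists_eq_add_of_le' (hτ.trans hτn)
  obtain ⟨k, rfl⟩ := Nat.exists_eq_add_of_le' hτ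
  set w : Fin (m + 2) → ℝ := fun i => (L i)⁻¹
  have hw : ∀ i, 0 < w i := fun i => inv_pos.2 (hL i)
  have hT : ∑ i, w i ≠ 0 := (sum_pos (fun i _ => hw i) univ_nonempty).ne'
  have hS : ∑ J ∈ Psets, c J = (m + 1).choose (k + 1) * ∑ i, w i := by
    simpa using sum_powersetCard_sum (α := Fin (m + 2)) (τ := k + 2) (by omega) w
  calc ∑ I ∈ Psets, (c I / ∑ J ∈ Psets, c J) • weightedProj w I
      = (∑ J ∈ Psets, c J)⁻¹ • ∑ I ∈ Psets, c I • weightedProj w I := by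
        simp only [div_eq_inv_mul, mul_smul, smul_sum]
    _ = (((m + 1).choose (k + 1) : ℝ) * ∑ i, w i)⁻¹ •
          (m.choose k : ℝ) • (∑ i, w i) • weightedProj w univ := by
        rw [hS, sum_powersetCard_smul_weightedProj (by omega) hw, Fintype.card_fin,
          Nat.add_sub_cancel, Nat.add_sub_cancel]
    _ = ((m.choose k : ℝ) / (m + 1).choose (k + 1)) • weightedProj w univ := by
        rw [smul_smul, smul_smul]
        congr 1
        field_simp
    _ = _ := by
        rw [cast_choose_div_cast_choose_add_one (by omega)]
        congr 1
        push_cast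
        ring
end

section
/- Under the same sampling distribution P(I) ∝ e_Iᵀ L⁻¹ e_I over subsets I of cardinality τ, with G_I = 𝕀_I L⁻¹ − (1/(e_Iᵀ L⁻¹ e_I)) L⁻¹ e_I e_Iᵀ L⁻¹, one has 𝔼_I[G_I] = ((τ−1)/(n−1)) G_{[n]}. -/
/-!
Write `w = L⁻¹` and `c I = ∑ i ∈ I, w i`, so that `P(I) ∝ c I`. The matrix `c I • G_I` is
supported on `I × I`, with entries `w i * (c I - w i)` on the diagonal and `-(w i * w j)` off it.
Summing over `τ`-subsets, the diagonal entry at `i` collects `w i * w k` once for every subset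
containing both `i` and `k ≠ i`, so only the pair count `C(n-2, τ-2)` enters:
`∑ I, c I • G_I = C(n-2, τ-2) • c [n] • G_[n]`. Likewise the normaliser is
`∑ I, c I = C(n-1, τ-1) * c [n]`, and `C(n-2, τ-2) / C(n-1, τ-1) = (τ-1)/(n-1)`.
-/

open Finset Matrix

section Counting

variable {α : Type*} [DecidableEq α]

theorem card_filter_powersetCard_mem {s : Finset α} {i : α} (hi : i ∈ s) {k : ℕ} (hk : 1 ≤ k) :
    #{I ∈ s.powersetCard k | i ∈ I} = (#s - 1).choose (k - 1) := by
  simpa using card_filter_powersetCard_subset {i} s k (by simpa) (by simpa)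

theorem card_filter_powersetCard_mem_mem {s : Finset α} {i j : α} (hi : i ∈ s) (hj : j ∈ s)
    (hij : i ≠ j) {k : ℕ} (hk : 2 ≤ k) :
    #{I ∈ s.powersetCard k | i ∈ I ∧ j ∈ I} = (#s - 2).choose (k - 2) := by
  have hcard : #{i, j} = 2 := card_pair hij
  have h := card_filter_powersetCard_subset {i, j} s k (by simp [insert_subset_iff, hi, hj])
    (by omega)
  simpa [hcard, insert_subset_iff] using h

theorem sum_sum_inter_eq_sum_card_filter_mul (F : Finset (Finset α)) (s : Finset α)
    (f : α → ℝ) :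
    ∑ I ∈ F, ∑ k ∈ s ∩ I, f k = ∑ k ∈ s, #{I ∈ F | k ∈ I} * f k := by
  simp_rw [← filter_mem_eq_inter, sum_filter]
  rw [sum_comm]
  refine sum_congr rfl fun k _ => ?_
  rw [← sum_filter, sum_const, nsmul_eq_mul]

end Counting

theorem Nat.choose_sub_two_div_choose_sub_one {n k : ℕ} (hk : 2 ≤ k) (hkn : k ≤ n) :
    ((n - 2).choose (k - 2) : ℝ) / (n - 1).choose (k - 1) = ((k : ℝ) - 1) / ((n : ℝ) - 1) := by
  obtain ⟨k, rfl⟩ := Nat.exists_eq_add_of_le' hk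
  obtain ⟨n, rfl⟩ := Nat.exists_eq_add_of_le' (hk.trans hkn)
  have hpos : (0 : ℝ) < (n + 1).choose (k + 1) := mod_cast Nat.choose_pos (by omega)
  have h' : ((n : ℝ) + 1) * n.choose k = (n + 1).choose (k + 1) * (k + 1) :=
    mod_cast Nat.add_one_mul_choose_eq n k
  simp only [Nat.add_sub_cancel, show n + 2 - 1 = n + 1 by omega, show k + 2 - 1 = k + 1 by omega]
  push_cast
  rw [div_eq_div_iff hpos.ne' (by ring_nf; positivity)]
  linear_combination h'

section CenteredWeightMatrix

variable {ι : Type*} [DecidableEq ι]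

/-- The paper's `G_I` for the weights `w = L⁻¹`. -/
noncomputable def centeredWeightMatrix (w : ι → ℝ) (I : Finset ι) : Matrix ι ι ℝ :=
  diagonal (fun i => (if i ∈ I then 1 else 0) * w i) -
    (∑ i ∈ I, w i)⁻¹ • vecMulVec (fun i => w i * if i ∈ I then 1 else 0)
      (fun i => w i * if i ∈ I then 1 else 0)

theorem sum_mul_centeredWeightMatrix_apply {w : ι → ℝ} (hw : ∀ i, 0 < w i) (I : Finset ι)
    (i j : ι) :
    (∑ k ∈ I, w k) * centeredWeightMatrix w I i j =
      if i ∈ I ∧ j ∈ I then (if i = j then w i * ∑ k ∈ I.erase i, w k else -(w i * w j))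
      else 0 := by
  by_cases hi : i ∈ I
  · have hc0 : ∑ k ∈ I, w k ≠ 0 := (sum_pos (fun k _ => hw k) ⟨i, hi⟩).ne'
    by_cases hj : j ∈ I <;> by_cases hij : i = j
    all_goals simp [centeredWeightMatrix, vecMulVec_apply, hi, hj, hij]
    all_goals field_simp
  · simp [centeredWeightMatrix, diagonal_apply, vecMulVec_apply, hi]

variable [Fintype ι] (F : Finset (Finset ι)) {l : ℕ}

theorem sum_ite_mem_sum_erase (hl : ∀ i j, i ≠ j → #{I ∈ F | i ∈ I ∧ j ∈ I} = l)
    (w : ι → ℝ) (i : ι) :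
    ∑ I ∈ F, (if i ∈ I then ∑ k ∈ I.erase i, w k else 0) = l * ∑ k ∈ univ.erase i, w k := by
  have herase : ∀ I : Finset ι, ∑ k ∈ I.erase i, w k = ∑ k ∈ univ.erase i ∩ I, w k :=
    fun I => by rw [erase_inter, univ_inter]
  rw [← sum_filter, mul_sum]
  simp_rw [herase, sum_sum_inter_eq_sum_card_filter_mul, filter_filter]
  refine sum_congr rfl fun k hk => ?_
  rw [hl i k (ne_of_mem_erase hk).symm]

theorem sum_sum_eq_mul_sum_of_card_filter_mem {r : ℕ} (hr : ∀ i, #{I ∈ F | i ∈ I} = r)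
    (w : ι → ℝ) : ∑ I ∈ F, ∑ k ∈ I, w k = r * ∑ k, w k := by
  simpa [hr, mul_sum] using sum_sum_inter_eq_sum_card_filter_mul F univ w

theorem sum_smul_centeredWeightMatrix {w : ι → ℝ} (hw : ∀ i, 0 < w i)
    (hl : ∀ i j, i ≠ j → #{I ∈ F | i ∈ I ∧ j ∈ I} = l) :
    ∑ I ∈ F, (∑ k ∈ I, w k) • centeredWeightMatrix w I =
      ((l : ℝ) * ∑ k, w k) • centeredWeightMatrix w univ := by
  ext i j
  simp only [Matrix.sum_apply, Matrix.smul_apply, smul_eq_mul, mul_assoc,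
    sum_mul_centeredWeightMatrix_apply hw, mem_univ, and_self, if_true]
  by_cases hij : i = j
  · subst hij
    simp only [and_self, if_true]
    rw [mul_left_comm, ← sum_ite_mem_sum_erase F hl, mul_sum]
    simp only [mul_ite, mul_zero]
  · simp only [hij, if_false]
    rw [← sum_filter, sum_const, nsmul_eq_mul, hl i j hij]

theorem sum_div_smul_centeredWeightMatrix_powersetCard {w : ι → ℝ} (hw : ∀ i, 0 < w i) {τ : ℕ}
    (hτ : 2 ≤ τ) (hτn : τ ≤ Fintype.card ι) :
    ∑ I ∈ powersetCard τ univ,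
        ((∑ i ∈ I, w i) / ∑ J ∈ powersetCard τ univ, ∑ i ∈ J, w i) • centeredWeightMatrix w I =
      (((τ : ℝ) - 1) / ((Fintype.card ι : ℝ) - 1)) • centeredWeightMatrix w univ := by
  have hmem : ∀ i, #{I ∈ powersetCard τ univ | i ∈ I} =
      (Fintype.card ι - 1).choose (τ - 1) := fun i =>
    card_filter_powersetCard_mem (mem_univ i) (by omega)
  have hpair : ∀ i j, i ≠ j → #{I ∈ powersetCard τ univ | i ∈ I ∧ j ∈ I} =
      (Fintype.card ι - 2).choose (τ - 2) := fun i j hij =>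
    card_filter_powersetCard_mem_mem (mem_univ i) (mem_univ j) hij hτ
  have hsum : 0 < ∑ k, w k :=
    sum_pos (fun k _ => hw k) (univ_nonempty_iff.mpr (Fintype.card_pos_iff.mp (by omega)))
  have hchoose : (0 : ℝ) < (Fintype.card ι - 1).choose (τ - 1) :=
    mod_cast Nat.choose_pos (by omega)
  simp_rw [div_eq_inv_mul (∑ i ∈ _, w i), mul_smul, ← smul_sum,
    sum_sum_eq_mul_sum_of_card_filter_mem _ hmem, sum_smul_centeredWeightMatrix _ hw hpair,
    smul_smul, ← Nat.choose_sub_two_div_choose_sub_one hτ hτn]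
  congr 1
  field_simp

end CenteredWeightMatrix

/-- Under the sampling distribution `P(I) ∝ e_Iᵀ L⁻¹ e_I` over subsets of
cardinality τ, the expectation of `G_I` equals `((τ−1)/(n−1)) G_{[n]}`. -/
theorem stmt4 {n : ℕ} (τ : ℕ) (hτ : 2 ≤ τ) (hτn : τ ≤ n)
    (L : Fin n → ℝ) (hL : ∀ i, 0 < L i) :
    let eI : Finset (Fin n) → (Fin n → ℝ) := fun I i => if i ∈ I then 1 else 0
    let c : Finset (Fin n) → ℝ := fun I => ∑ i ∈ I, (L i)⁻¹
    let v : Finset (Fin n) → (Fin n → ℝ) := fun I i => (L i)⁻¹ * eI I i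
    let G : Finset (Fin n) → Matrix (Fin n) (Fin n) ℝ := fun I =>
      Matrix.diagonal (fun i => eI I i * (L i)⁻¹) -
        (c I)⁻¹ • Matrix.vecMulVec (v I) (v I)
    let Psets := Finset.powersetCard τ (Finset.univ : Finset (Fin n))
    let p : Finset (Fin n) → ℝ := fun I => c I / ∑ J ∈ Psets, c J
    ∑ I ∈ Psets, p I • G I = (((τ : ℝ) - 1) / ((n : ℝ) - 1)) • G Finset.univ := by
  intro eI c v G Psets p
  have h := sum_div_smul_centeredWeightMatrix_powersetCard (fun i => inv_pos.mpr (hL i)) hτ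
    (by rwa [Fintype.card_fin])
  rw [Fintype.card_fin] at h
  exact h
end

section
/- Let h(x) = Σ_{i=1}^n h_i(x_i) with each h_i : ℝ → ℝ being μ-strongly convex. Let x* minimize h over C = {x : Σ_i x_i = 0}. Then for every x ∈ C, ‖G_{[n]} ∇h(x)‖² ≥ (2μ / L_max²) (h(x) − h(x*)), where G_{[n]} = L⁻¹ P_{[n]} built from L = diag(L_1,…,L_n), and L_max = max_i L_i. -/
open Matrix BigOperators Finset

/-- Gradient lower bound: for separable μ-strongly convex h and x* the minimizer
over C = {x : ∑ x i = 0}, every feasible x satisfies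
`‖G_{[n]} ∇h(x)‖² ≥ (2μ/L_max²)(h(x) − h(x*))`. -/
theorem stmt9 {n : ℕ} (L : Fin n → ℝ) (hL : ∀ i, 0 < L i)
    (Lmax : ℝ) (hLmax : ∀ i, L i ≤ Lmax) (μ : ℝ) (hμ : 0 < μ)
    (h : Fin n → ℝ → ℝ) (g : Fin n → ℝ → ℝ)
    (hderiv : ∀ i x, HasDerivAt (h i) (g i x) x)
    (hsc : ∀ i x y, h i y + g i y * (x - y) + μ / 2 * (x - y) ^ 2 ≤ h i x)
    (xstar : Fin n → ℝ) (hfeas : ∑ i, xstar i = 0)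
    (hopt : ∀ z : Fin n → ℝ, (∑ i, z i = 0) → (∑ i, h i (xstar i)) ≤ ∑ i, h i (z i))
    (x : Fin n → ℝ) (hx : ∑ i, x i = 0) :
    let c : ℝ := ∑ i, (L i)⁻¹
    let G : Matrix (Fin n) (Fin n) ℝ :=
      Matrix.diagonal (fun i => (L i)⁻¹) -
        c⁻¹ • Matrix.vecMulVec (fun i => (L i)⁻¹) (fun i => (L i)⁻¹)
    2 * μ / Lmax ^ 2 * ((∑ i, h i (x i)) - ∑ i, h i (xstar i))
      ≤ ∑ i, ((G *ᵥ fun j => g j (x j)) i) ^ 2 := by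
  intro c G
  rcases Nat.eq_zero_or_pos n with hn | hn
  · subst hn
    simp
  set v : Fin n → ℝ := fun i => g i (x i) with hv
  set lam : ℝ := c⁻¹ * ∑ j, (L j)⁻¹ * v j with hlam
  have hLmaxpos : 0 < Lmax := lt_of_lt_of_le (hL ⟨0, hn⟩) (hLmax ⟨0, hn⟩)
  have hG : ∀ i, (G *ᵥ v) i = (L i)⁻¹ * (v i - lam) := by
    intro i
    simp only [G, Matrix.mulVec, dotProduct, Matrix.sub_apply,
      Matrix.diagonal_apply, Matrix.smul_apply, Matrix.vecMulVec_apply, smul_eq_mul,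
      sub_mul, ite_mul, zero_mul]
    rw [Finset.sum_sub_distrib,
      Finset.sum_ite_eq Finset.univ i (fun j => (L i)⁻¹ * v j)]
    simp only [Finset.mem_univ, if_true]
    rw [hlam, mul_sub]
    congr 1
    rw [Finset.mul_sum, Finset.mul_sum]
    exact Finset.sum_congr rfl fun j _ => by ring
  have hsum0 : ∑ i, (xstar i - x i) = 0 := by
    rw [Finset.sum_sub_distrib, hfeas, hx]; ring
  -- Step: h(x) - h(x*) ≤ Σ (v i - lam)²/(2μ)
  have step3 : (∑ i, h i (x i)) - ∑ i, h i (xstar i)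
      ≤ ∑ i, (v i - lam) ^ 2 / (2 * μ) := by
    have h1 : (∑ i, h i (x i)) - ∑ i, h i (xstar i)
        ≤ ∑ i, (-(v i - lam) * (xstar i - x i) - μ / 2 * (xstar i - x i) ^ 2) := by
      have h2 : ∀ i ∈ Finset.univ, h i (x i) - h i (xstar i)
          ≤ (-(v i - lam) * (xstar i - x i) - μ / 2 * (xstar i - x i) ^ 2)
            - lam * (xstar i - x i) := by
        intro i _
        have := hsc i (xstar i) (x i)
        simp only [hv]
        nlinarith [this]
      have h3 := Finset.sum_le_sum h2
      have e1 : ∑ i, ((-(v i - lam) * (xstar i - x i) - μ / 2 * (xstar i - x i) ^ 2)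
            - lam * (xstar i - x i))
          = (∑ i, (-(v i - lam) * (xstar i - x i) - μ / 2 * (xstar i - x i) ^ 2))
            - lam * ∑ i, (xstar i - x i) := by
        rw [Finset.mul_sum, ← Finset.sum_sub_distrib]
      rw [e1, hsum0, mul_zero, sub_zero] at h3
      rw [Finset.sum_sub_distrib] at h3
      exact h3
    refine h1.trans (Finset.sum_le_sum fun i _ => ?_)
    rw [le_div_iff₀ (by positivity : (0:ℝ) < 2 * μ)]
    nlinarith [sq_nonneg (μ * (xstar i - x i) + (v i - lam))]
  -- Step: (v i - lam)² ≤ Lmax² * ((L i)⁻¹ (v i - lam))²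
  have step4 : ∀ i, (v i - lam) ^ 2 ≤ Lmax ^ 2 * ((L i)⁻¹ * (v i - lam)) ^ 2 := by
    intro i
    have ht : Lmax⁻¹ ≤ (L i)⁻¹ := inv_anti₀ (hL i) (hLmax i)
    have h1 : 1 ≤ Lmax * (L i)⁻¹ := by
      rw [← mul_inv_cancel₀ hLmaxpos.ne']
      exact mul_le_mul_of_nonneg_left ht hLmaxpos.le
    nlinarith [sq_nonneg (v i - lam), mul_le_mul h1 h1 zero_le_one (by positivity)]
  have total : 2 * μ * ((∑ i, h i (x i)) - ∑ i, h i (xstar i))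
      ≤ Lmax ^ 2 * ∑ i, ((G *ᵥ v) i) ^ 2 := by
    have t1 := mul_le_mul_of_nonneg_left step3 (by positivity : (0:ℝ) ≤ 2 * μ)
    have t2 : 2 * μ * ∑ i, (v i - lam) ^ 2 / (2 * μ) = ∑ i, (v i - lam) ^ 2 := by
      rw [Finset.mul_sum]
      exact Finset.sum_congr rfl fun i _ => by field_simp
    have t3 : ∑ i, (v i - lam) ^ 2 ≤ Lmax ^ 2 * ∑ i, ((G *ᵥ v) i) ^ 2 := by
      rw [Finset.mul_sum]
      refine Finset.sum_le_sum fun i _ => ?_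
      rw [hG i]; exact step4 i
    linarith [t1, t2.symm.le, t3]
  rw [div_mul_eq_mul_div, div_le_iff₀ (by positivity : (0:ℝ) < Lmax ^ 2)]
  nlinarith [total]
end

section
/- Let h(x) = Σ_{i=1}^n h_i(x_i) with each h_i : ℝ → ℝ being L_i-smooth (h_i(x) ≤ h_i(y) + h_i'(y)(x−y) + (L_i/2)(x−y)²). Let x* minimize h over C = {x : Σ_i x_i = 0}. Then for every x ∈ C, ‖G_{[n]} ∇h(x)‖²_L ≤ (2 L_max / L_min) (h(x) − h(x*)), where ‖v‖²_L = vᵀ L v, L = diag(L_1,…,L_n), L_max = max_i L_i, L_min = min_i L_i. -/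
/-!
With `d := G ∇h(x) = L⁻¹ (∇h(x) - μ 𝟙)`, where `μ` is the `L⁻¹`-weighted mean of `∇h(x)`, the
coordinates of `d` sum to zero, so `x - d` is feasible, and `⟪∇h(x), d⟫ = ‖d‖²_L`. The smoothness
upper bound along `-d` therefore gives `h(x - d) ≤ h(x) - ‖d‖²_L / 2`, and comparing with the
minimum `h(x*) ≤ h(x - d)` yields `‖d‖²_L ≤ 2 (h(x) - h(x*))`; finally `1 ≤ L_max / L_min`.
-/

open Matrix BigOperators Finset

section ProjectedGradient

variable {ι K : Type*} [Fintype ι] [DecidableEq ι] [Field K]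

/-- The paper's `G_{[n]} = P_{[n]} L⁻¹`, with `L = diagonal L`. -/
def weightedProjMatrix (L : ι → K) : Matrix ι ι K :=
  diagonal (fun i => (L i)⁻¹) - (∑ i, (L i)⁻¹)⁻¹ • vecMulVec (fun i => (L i)⁻¹) (fun i => (L i)⁻¹)

lemma weightedProjMatrix_mulVec_apply (L : ι → K) (v : ι → K) (i : ι) :
    (weightedProjMatrix L *ᵥ v) i
      = (L i)⁻¹ * (v i - (∑ j, (L j)⁻¹)⁻¹ * ∑ j, (L j)⁻¹ * v j) := by
  rw [weightedProjMatrix, sub_mulVec, smul_mulVec, vecMulVec_mulVec]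
  simp only [Pi.sub_apply, Pi.smul_apply, mulVec_diagonal, smul_eq_mul, op_smul_eq_mul,
    dotProduct]
  ring

lemma sum_weightedProjMatrix_mulVec {L : ι → K} (hL : ∑ i, (L i)⁻¹ ≠ 0) (v : ι → K) :
    ∑ i, (weightedProjMatrix L *ᵥ v) i = 0 := by
  simp only [weightedProjMatrix_mulVec_apply, mul_sub, Finset.sum_sub_distrib, ← Finset.sum_mul]
  rw [← mul_assoc, mul_inv_cancel₀ hL, one_mul, sub_self]

lemma diagonal_mulVec_weightedProjMatrix_mulVec {L : ι → K} (hL : ∀ i, L i ≠ 0) (v : ι → K) :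
    diagonal L *ᵥ (weightedProjMatrix L *ᵥ v)
      = v - ((∑ j, (L j)⁻¹)⁻¹ * ∑ j, (L j)⁻¹ * v j) • fun _ => 1 := by
  ext i
  simp [mulVec_diagonal, weightedProjMatrix_mulVec_apply, hL i]

lemma weightedProjMatrix_quadForm {L : ι → K} (hL : ∀ i, L i ≠ 0) (hsum : ∑ i, (L i)⁻¹ ≠ 0)
    (v : ι → K) :
    (weightedProjMatrix L *ᵥ v) ⬝ᵥ (diagonal L *ᵥ (weightedProjMatrix L *ᵥ v))
      = v ⬝ᵥ (weightedProjMatrix L *ᵥ v) := by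
  rw [diagonal_mulVec_weightedProjMatrix_mulVec hL, dotProduct_sub, dotProduct_smul,
    dotProduct_comm _ v]
  simp [dotProduct, sum_weightedProjMatrix_mulVec hsum]

end ProjectedGradient

lemma sum_sub_le_of_smooth {ι : Type*} [Fintype ι] [DecidableEq ι] {L : ι → ℝ} {h g : ι → ℝ → ℝ}
    (hsmooth : ∀ i x y, h i x ≤ h i y + g i y * (x - y) + L i / 2 * (x - y) ^ 2)
    (x d : ι → ℝ) :
    ∑ i, h i (x i - d i)
      ≤ ∑ i, h i (x i) - (fun i => g i (x i)) ⬝ᵥ d + d ⬝ᵥ (diagonal L *ᵥ d) / 2 := by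
  calc ∑ i, h i (x i - d i)
      ≤ ∑ i, (h i (x i) + g i (x i) * (x i - d i - x i) + L i / 2 * (x i - d i - x i) ^ 2) :=
        Finset.sum_le_sum fun i _ => hsmooth i _ _
    _ = _ := by
        simp only [dotProduct, mulVec_diagonal, Finset.sum_div, ← Finset.sum_sub_distrib,
          ← Finset.sum_add_distrib]
        exact Finset.sum_congr rfl fun i _ => by ring

theorem stmt10_general {n : ℕ} (L : Fin n → ℝ) (Lmin Lmax : ℝ) (hLmin : 0 < Lmin)
    (h1 : ∀ i, Lmin ≤ L i) (h2 : ∀ i, L i ≤ Lmax)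
    (h : Fin n → ℝ → ℝ) (g : Fin n → ℝ → ℝ)
    (hsmooth : ∀ i x y, h i x ≤ h i y + g i y * (x - y) + L i / 2 * (x - y) ^ 2)
    (xstar : Fin n → ℝ)
    (hopt : ∀ z : Fin n → ℝ, (∑ i, z i = 0) → (∑ i, h i (xstar i)) ≤ ∑ i, h i (z i))
    (x : Fin n → ℝ) (hx : ∑ i, x i = 0) :
    let c : ℝ := ∑ i, (L i)⁻¹
    let G : Matrix (Fin n) (Fin n) ℝ :=
      Matrix.diagonal (fun i => (L i)⁻¹) -
        c⁻¹ • Matrix.vecMulVec (fun i => (L i)⁻¹) (fun i => (L i)⁻¹)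
    let quadL : (Fin n → ℝ) → ℝ := fun w => w ⬝ᵥ (Matrix.diagonal L *ᵥ w)
    quadL (G *ᵥ fun j => g j (x j))
      ≤ 2 * Lmax / Lmin * ((∑ i, h i (x i)) - ∑ i, h i (xstar i)) := by
  intro c G quadL
  rcases isEmpty_or_nonempty (Fin n) with _ | ⟨⟨i₀⟩⟩
  · simp [quadL, dotProduct]
  have hLpos : ∀ i, 0 < L i := fun i => hLmin.trans_le (h1 i)
  have hc : c ≠ 0 := (Finset.sum_pos (fun i _ => inv_pos.mpr (hLpos i)) ⟨i₀, mem_univ i₀⟩).ne'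
  set v : Fin n → ℝ := fun j => g j (x j)
  set d := weightedProjMatrix L *ᵥ v
  have hfeas : ∑ i, (x i - d i) = 0 := by
    rw [Finset.sum_sub_distrib, hx, sum_weightedProjMatrix_mulVec hc, sub_zero]
  have hdescent := sum_sub_le_of_smooth hsmooth x d
  rw [← weightedProjMatrix_quadForm (fun i => (hLpos i).ne') hc] at hdescent
  have hgap : 0 ≤ (∑ i, h i (x i)) - ∑ i, h i (xstar i) := sub_nonneg.mpr (hopt x hx)
  have hratio : 2 ≤ 2 * Lmax / Lmin := by
    rw [le_div_iff₀ hLmin]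
    linarith [h1 i₀, h2 i₀]
  calc quadL d ≤ 2 * ((∑ i, h i (x i)) - ∑ i, h i (xstar i)) := by
        linarith [hopt _ hfeas]
    _ ≤ _ := mul_le_mul_of_nonneg_right hratio hgap

/-- Gradient upper bound: for separable h with L_i-smooth components and x* the
minimizer over C = {x : ∑ x i = 0}, every feasible x satisfies
`‖G_{[n]} ∇h(x)‖²_L ≤ (2 L_max / L_min)(h(x) − h(x*))`. -/
theorem stmt10 {n : ℕ} (L : Fin n → ℝ) (Lmin Lmax : ℝ) (hLmin : 0 < Lmin)
    (h1 : ∀ i, Lmin ≤ L i) (h2 : ∀ i, L i ≤ Lmax)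
    (h : Fin n → ℝ → ℝ) (g : Fin n → ℝ → ℝ)
    (hderiv : ∀ i x, HasDerivAt (h i) (g i x) x)
    (hsmooth : ∀ i x y, h i x ≤ h i y + g i y * (x - y) + L i / 2 * (x - y) ^ 2)
    (xstar : Fin n → ℝ) (hfeas : ∑ i, xstar i = 0)
    (hopt : ∀ z : Fin n → ℝ, (∑ i, z i = 0) → (∑ i, h i (xstar i)) ≤ ∑ i, h i (z i))
    (x : Fin n → ℝ) (hx : ∑ i, x i = 0) :
    let c : ℝ := ∑ i, (L i)⁻¹
    let G : Matrix (Fin n) (Fin n) ℝ :=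
      Matrix.diagonal (fun i => (L i)⁻¹) -
        c⁻¹ • Matrix.vecMulVec (fun i => (L i)⁻¹) (fun i => (L i)⁻¹)
    let quadL : (Fin n → ℝ) → ℝ := fun w => w ⬝ᵥ (Matrix.diagonal L *ᵥ w)
    quadL (G *ᵥ fun j => g j (x j))
      ≤ 2 * Lmax / Lmin * ((∑ i, h i (x i)) - ∑ i, h i (xstar i)) :=
  stmt10_general L Lmin Lmax hLmin h1 h2 h g hsmooth xstar hopt x hx
end

section
/- Descent lemma for projected coordinate descent: let h(x) = Σ_i h_i(x_i) with each h_i being L_i-smooth, and sample I ⊆ [n] of size τ with probability proportional to e_Iᵀ L⁻¹ e_I. Given x ∈ C = {x : Σ_i x_i = 0}, set y = x − G_I ∇h(x). Then 𝔼_I[h(y)] ≤ h(x) − (1/2)((τ−1)/(n−1)) ‖G_{[n]} ∇h(x)‖²_L. -/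
open Matrix BigOperators Finset

/-!
With `w = ∇h(x)` and `d = G_I w` one has `d_i = L_i⁻¹ (w_i - m_I)` on `I`, where `m_I` is the
`L⁻¹`-weighted mean of `w` on `I`. Hence `⟨w, d⟩ = ‖d‖²_L = Q_I := ∑_{i ∈ I} L_i⁻¹ (w_i - m_I)²`,
and coordinatewise smoothness gives `h(x - d) ≤ h(x) - Q_I / 2`. Since
`c_I Q_I = ½ ∑_{i,j ∈ I} L_i⁻¹ L_j⁻¹ (w_i - w_j)²` is a sum over pairs, sampling `I` with
probability `c_I / ∑_J c_J` and comparing the number `C(n-2, τ-2)` of `τ`-sets through a pair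
with the number `C(n-1, τ-1)` through a point gives `𝔼 Q_I = (τ-1)/(n-1) · Q_[n]`.
-/

section DoubleCounting

variable {ι κ M : Type*} [DecidableEq ι] [AddCommMonoid M]

theorem sum_powersetCard_sum_filter_subset (s : Finset ι) (k : ℕ) (X : Finset κ)
    (u : κ → Finset ι) (f : κ → M) :
    ∑ I ∈ s.powersetCard k, ∑ x ∈ X with u x ⊆ I, f x
      = ∑ x ∈ X, #{I ∈ s.powersetCard k | u x ⊆ I} • f x := by
  rw [sum_comm' (t' := X) (s' := fun x => {I ∈ s.powersetCard k | u x ⊆ I})]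
  · simp only [sum_const]
  · intro I x
    simp only [mem_filter]
    tauto

theorem sum_powersetCard_sum_s11 (s : Finset ι) {k : ℕ} (hk : 1 ≤ k) (f : ι → ℝ) :
    ∑ I ∈ s.powersetCard k, ∑ i ∈ I, f i = ((#s - 1).choose (k - 1) : ℝ) * ∑ i ∈ s, f i := by
  calc ∑ I ∈ s.powersetCard k, ∑ i ∈ I, f i
      = ∑ I ∈ s.powersetCard k, ∑ i ∈ s with {i} ⊆ I, f i := by
        refine sum_congr rfl fun I hI => sum_congr ?_ fun _ _ => rfl
        ext i
        simpa using fun hi => (mem_powersetCard.1 hI).1 hi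
    _ = ∑ i ∈ s, #{I ∈ s.powersetCard k | {i} ⊆ I} • f i :=
        sum_powersetCard_sum_filter_subset s k s _ f
    _ = _ := by
        rw [mul_sum]
        refine sum_congr rfl fun i hi => ?_
        rw [card_filter_powersetCard_subset _ _ _ (by simpa) (by simpa), card_singleton,
          nsmul_eq_mul]

theorem sum_powersetCard_sum_sum (s : Finset ι) {k : ℕ} (hk : 2 ≤ k) (F : ι → ι → ℝ)
    (hF : ∀ i, F i i = 0) :
    ∑ I ∈ s.powersetCard k, ∑ i ∈ I, ∑ j ∈ I, F i j
      = ((#s - 2).choose (k - 2) : ℝ) * ∑ i ∈ s, ∑ j ∈ s, F i j := by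
  calc ∑ I ∈ s.powersetCard k, ∑ i ∈ I, ∑ j ∈ I, F i j
      = ∑ I ∈ s.powersetCard k, ∑ p ∈ s ×ˢ s with {p.1, p.2} ⊆ I, F p.1 p.2 := by
        refine sum_congr rfl fun I hI => ?_
        rw [← sum_product']
        refine sum_congr ?_ fun _ _ => rfl
        ext p
        have hIs := (mem_powersetCard.1 hI).1
        simp only [mem_product, mem_filter, insert_subset_iff, singleton_subset_iff]
        exact ⟨fun h => ⟨⟨hIs h.1, hIs h.2⟩, h⟩, And.right⟩
    _ = ∑ p ∈ s ×ˢ s, #{I ∈ s.powersetCard k | {p.1, p.2} ⊆ I} • F p.1 p.2 :=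
        sum_powersetCard_sum_filter_subset s k _ _ _
    _ = _ := by
        rw [sum_product, mul_sum]
        refine sum_congr rfl fun i hi => ?_
        rw [mul_sum]
        refine sum_congr rfl fun j hj => ?_
        obtain rfl | hij := eq_or_ne i j
        · simp [hF]
        have hpair : #({i, j} : Finset ι) = 2 := card_pair hij
        rw [card_filter_powersetCard_subset _ _ _ (by simp [insert_subset_iff, hi, hj])
          (by rw [hpair]; omega), hpair, nsmul_eq_mul]

end DoubleCounting

theorem Nat.cast_choose_sub_two_div {n k : ℕ} (hk : 2 ≤ k) (hkn : k ≤ n) :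
    ((n - 2).choose (k - 2) : ℝ) / (n - 1).choose (k - 1) = (k - 1) / (n - 1) := by
  obtain ⟨m, rfl⟩ : ∃ m, n = m + 2 := ⟨n - 2, by omega⟩
  obtain ⟨j, rfl⟩ : ∃ j, k = j + 2 := ⟨k - 2, by omega⟩
  have hpos : (0 : ℝ) < (m + 1).choose (j + 1) := by
    exact_mod_cast Nat.choose_pos (by omega)
  have key : ((m + 1 : ℕ) : ℝ) * m.choose j = (m + 1).choose (j + 1) * (j + 1 : ℕ) := by
    exact_mod_cast Nat.add_one_mul_choose_eq m j
  simp only [Nat.add_sub_cancel, show m + 2 - 1 = m + 1 by omega, show j + 2 - 1 = j + 1 by omega]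
  push_cast at key ⊢
  rw [show (m : ℝ) + 2 - 1 = m + 1 by ring, show (j : ℝ) + 2 - 1 = j + 1 by ring,
    div_eq_div_iff hpos.ne' (by positivity)]
  linear_combination key

section WeightedSpread

variable {ι : Type*} {a w : ι → ℝ} {I : Finset ι}

noncomputable def weightedMean (a w : ι → ℝ) (I : Finset ι) : ℝ :=
  (∑ i ∈ I, a i * w i) / ∑ i ∈ I, a i

noncomputable def weightedSqDev (a w : ι → ℝ) (I : Finset ι) : ℝ :=
  ∑ i ∈ I, a i * (w i - weightedMean a w I) ^ 2

theorem sum_mul_sub_weightedMean (ha : ∀ i ∈ I, 0 < a i) :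
    ∑ i ∈ I, a i * (w i - weightedMean a w I) = 0 := by
  rcases I.eq_empty_or_nonempty with rfl | hI
  · simp
  have hc : (∑ i ∈ I, a i) ≠ 0 := (sum_pos ha hI).ne'
  simp only [mul_sub, sum_sub_distrib, ← sum_mul, weightedMean]
  field_simp
  ring

theorem sum_sum_mul_sub_sq_eq_two_mul_weightedSqDev (ha : ∀ i ∈ I, 0 < a i) :
    ∑ i ∈ I, ∑ j ∈ I, a i * a j * (w i - w j) ^ 2
      = 2 * ((∑ i ∈ I, a i) * weightedSqDev a w I) := by
  set m := weightedMean a w I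
  have hcentred : ∑ i ∈ I, a i * (w i - m) = 0 := sum_mul_sub_weightedMean ha
  calc ∑ i ∈ I, ∑ j ∈ I, a i * a j * (w i - w j) ^ 2
      = (∑ i ∈ I, a i * (w i - m) ^ 2) * (∑ j ∈ I, a j)
        + (∑ i ∈ I, a i) * (∑ j ∈ I, a j * (w j - m) ^ 2)
        - 2 * ((∑ i ∈ I, a i * (w i - m)) * ∑ j ∈ I, a j * (w j - m)) := by
        rw [sum_mul_sum, sum_mul_sum, sum_mul_sum, mul_sum, ← sum_add_distrib,
          ← sum_sub_distrib]
        refine sum_congr rfl fun i _ => ?_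
        rw [mul_sum, ← sum_add_distrib, ← sum_sub_distrib]
        refine sum_congr rfl fun j _ => ?_
        ring
    _ = 2 * ((∑ i ∈ I, a i) * weightedSqDev a w I) := by
        rw [hcentred, weightedSqDev]
        ring

end WeightedSpread

section ProjMatrix

variable {ι : Type*} [Fintype ι] [DecidableEq ι]

/-- The paper's `G_I = 𝕀_I L⁻¹ − (e_Iᵀ L⁻¹ e_I)⁻¹ L⁻¹ e_I e_Iᵀ L⁻¹` for `L = diag L`. -/
noncomputable def projMatrix (L : ι → ℝ) (I : Finset ι) : Matrix ι ι ℝ :=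
  diagonal (fun i => (if i ∈ I then 1 else 0) * (L i)⁻¹) -
    (∑ i ∈ I, (L i)⁻¹)⁻¹ • vecMulVec (fun i => (L i)⁻¹ * if i ∈ I then 1 else 0)
      (fun i => (L i)⁻¹ * if i ∈ I then 1 else 0)

theorem projMatrix_mulVec (L w : ι → ℝ) (I : Finset ι) :
    projMatrix L I *ᵥ w
      = fun i => if i ∈ I then (L i)⁻¹ * (w i - weightedMean L⁻¹ w I) else 0 := by
  ext i
  have hdot : (fun j => (L j)⁻¹ * if j ∈ I then 1 else 0) ⬝ᵥ w = ∑ j ∈ I, (L⁻¹) j * w j := by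
    simp [dotProduct, sum_ite_mem]
  simp only [projMatrix, sub_mulVec, smul_mulVec, vecMulVec_mulVec, hdot, mulVec_diagonal,
    Pi.sub_apply, Pi.smul_apply, weightedMean]
  split_ifs
  · simp only [mul_one, div_eq_mul_inv, op_smul_eq_mul, Pi.inv_apply, smul_eq_mul]
    ring
  · simp

variable {L w : ι → ℝ} {I : Finset ι}

theorem dotProduct_projMatrix_mulVec (hL : ∀ i ∈ I, 0 < L i) :
    w ⬝ᵥ (projMatrix L I *ᵥ w) = weightedSqDev L⁻¹ w I := by
  have hcentred : ∑ i ∈ I, (L⁻¹) i * (w i - weightedMean L⁻¹ w I) = 0 :=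
    sum_mul_sub_weightedMean fun i hi => inv_pos.2 (hL i hi)
  rw [projMatrix_mulVec, weightedSqDev, dotProduct]
  simp only [mul_ite, mul_zero, sum_ite_mem, univ_inter]
  set m := weightedMean L⁻¹ w I
  have hsplit : ∀ i, w i * ((L i)⁻¹ * (w i - m)) = (L⁻¹) i * (w i - m) ^ 2 + m * ((L⁻¹) i * (w i - m)) :=
    fun i => by rw [Pi.inv_apply]; ring
  rw [sum_congr rfl fun i _ => hsplit i, sum_add_distrib, ← mul_sum, hcentred, mul_zero, add_zero]

theorem quadForm_projMatrix_mulVec (hL : ∀ i ∈ I, L i ≠ 0) :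
    (projMatrix L I *ᵥ w) ⬝ᵥ (diagonal L *ᵥ (projMatrix L I *ᵥ w)) = weightedSqDev L⁻¹ w I := by
  rw [projMatrix_mulVec, weightedSqDev, dotProduct]
  have hterm : ∀ i, (if i ∈ I then (L i)⁻¹ * (w i - weightedMean L⁻¹ w I) else 0) *
      (L i * if i ∈ I then (L i)⁻¹ * (w i - weightedMean L⁻¹ w I) else 0)
        = if i ∈ I then (L⁻¹) i * (w i - weightedMean L⁻¹ w I) ^ 2 else 0 := fun i => by
    split_ifs with hi
    · rw [Pi.inv_apply]
      field_simp [hL i hi]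
    · simp
  simp only [mulVec_diagonal, hterm, sum_ite_mem, univ_inter]

end ProjMatrix

section Descent

variable {ι : Type*} [Fintype ι] [DecidableEq ι] {h g : ι → ℝ → ℝ} {L : ι → ℝ}

theorem sum_sub_le_of_quadratic_upper_bound
    (hsmooth : ∀ i x y, h i x ≤ h i y + g i y * (x - y) + L i / 2 * (x - y) ^ 2) (x d : ι → ℝ) :
    ∑ i, h i (x i - d i)
      ≤ ∑ i, h i (x i) - (fun i => g i (x i)) ⬝ᵥ d + 1 / 2 * (d ⬝ᵥ (diagonal L *ᵥ d)) := by
  have hcoord : ∀ i, h i (x i - d i) ≤ h i (x i) - g i (x i) * d i + 1 / 2 * (d i * (L i * d i)) :=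
    fun i => by
      have := hsmooth i (x i - d i) (x i)
      rw [sub_sub_cancel_left] at this
      linarith
  calc ∑ i, h i (x i - d i)
      ≤ ∑ i, (h i (x i) - g i (x i) * d i + 1 / 2 * (d i * (L i * d i))) :=
        sum_le_sum fun i _ => hcoord i
    _ = _ := by
        simp only [dotProduct, mulVec_diagonal, sum_add_distrib, sum_sub_distrib, mul_sum]

theorem sum_sub_projMatrix_mulVec_le (hL : ∀ i, 0 < L i)
    (hsmooth : ∀ i x y, h i x ≤ h i y + g i y * (x - y) + L i / 2 * (x - y) ^ 2)
    (x : ι → ℝ) (I : Finset ι) :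
    ∑ i, h i ((x - projMatrix L I *ᵥ fun j => g j (x j)) i)
      ≤ ∑ i, h i (x i) - 1 / 2 * weightedSqDev L⁻¹ (fun j => g j (x j)) I := by
  have := sum_sub_le_of_quadratic_upper_bound hsmooth x (projMatrix L I *ᵥ fun j => g j (x j))
  rw [dotProduct_projMatrix_mulVec fun i _ => hL i,
    quadForm_projMatrix_mulVec fun i _ => (hL i).ne'] at this
  simp only [Pi.sub_apply]
  linarith

end Descent

section Sampling

variable {ι : Type*} [DecidableEq ι] {s : Finset ι} {a : ι → ℝ} {k : ℕ}

theorem sum_powersetCard_sum_pos (ha : ∀ i ∈ s, 0 < a i) (hk : 1 ≤ k) (hks : k ≤ #s) :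
    0 < ∑ J ∈ s.powersetCard k, ∑ i ∈ J, a i := by
  rw [sum_powersetCard_sum_s11 s hk]
  have hs : s.Nonempty := card_pos.1 (by omega)
  exact mul_pos (by exact_mod_cast Nat.choose_pos (by omega)) (sum_pos ha hs)

theorem sum_powersetCard_div_mul_weightedSqDev (ha : ∀ i ∈ s, 0 < a i) (hk : 2 ≤ k)
    (hks : k ≤ #s) (w : ι → ℝ) :
    ∑ I ∈ s.powersetCard k,
        (∑ i ∈ I, a i) / (∑ J ∈ s.powersetCard k, ∑ i ∈ J, a i) * weightedSqDev a w I
      = ((k : ℝ) - 1) / ((#s : ℝ) - 1) * weightedSqDev a w s := by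
  have hnorm : ∑ J ∈ s.powersetCard k, ∑ i ∈ J, a i
      = ((#s - 1).choose (k - 1) : ℝ) * ∑ i ∈ s, a i := sum_powersetCard_sum_s11 s (by omega) a
  have hweighted : ∑ I ∈ s.powersetCard k, (∑ i ∈ I, a i) * weightedSqDev a w I
      = ((#s - 2).choose (k - 2) : ℝ) * ((∑ i ∈ s, a i) * weightedSqDev a w s) := by
    have hpairs : ∀ I ⊆ s, (∑ i ∈ I, a i) * weightedSqDev a w I
        = 1 / 2 * ∑ i ∈ I, ∑ j ∈ I, a i * a j * (w i - w j) ^ 2 := fun I hI => by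
      rw [sum_sum_mul_sub_sq_eq_two_mul_weightedSqDev fun i hi => ha i (hI hi)]
      ring
    rw [sum_congr rfl fun I hI => hpairs I (mem_powersetCard.1 hI).1, ← mul_sum,
      sum_powersetCard_sum_sum s hk _ (by simp), hpairs s subset_rfl]
    ring
  have hS : (0 : ℝ) < ∑ i ∈ s, a i := sum_pos ha (card_pos.1 (by omega))
  have hC : (0 : ℝ) < (#s - 1).choose (k - 1) := by exact_mod_cast Nat.choose_pos (by omega)
  rw [← Nat.cast_choose_sub_two_div hk hks]
  simp only [div_mul_eq_mul_div, ← sum_div]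
  rw [hweighted, hnorm]
  field_simp

end Sampling

theorem stmt11_general {n : ℕ} (τ : ℕ) (hτ : 2 ≤ τ) (hτn : τ ≤ n)
    (L : Fin n → ℝ) (hL : ∀ i, 0 < L i)
    (h : Fin n → ℝ → ℝ) (g : Fin n → ℝ → ℝ)
    (hsmooth : ∀ i x y, h i x ≤ h i y + g i y * (x - y) + L i / 2 * (x - y) ^ 2)
    (x : Fin n → ℝ) :
    let eI : Finset (Fin n) → (Fin n → ℝ) := fun I i => if i ∈ I then 1 else 0
    let c : Finset (Fin n) → ℝ := fun I => ∑ i ∈ I, (L i)⁻¹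
    let v : Finset (Fin n) → (Fin n → ℝ) := fun I i => (L i)⁻¹ * eI I i
    let G : Finset (Fin n) → Matrix (Fin n) (Fin n) ℝ := fun I =>
      Matrix.diagonal (fun i => eI I i * (L i)⁻¹) -
        (c I)⁻¹ • Matrix.vecMulVec (v I) (v I)
    let Psets := Finset.powersetCard τ (Finset.univ : Finset (Fin n))
    let p : Finset (Fin n) → ℝ := fun I => c I / ∑ J ∈ Psets, c J
    let H : (Fin n → ℝ) → ℝ := fun z => ∑ i, h i (z i)
    let gradH : (Fin n → ℝ) → (Fin n → ℝ) := fun z j => g j (z j)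
    let quadL : (Fin n → ℝ) → ℝ := fun w => w ⬝ᵥ (Matrix.diagonal L *ᵥ w)
    ∑ I ∈ Psets, p I * H (x - G I *ᵥ gradH x)
      ≤ H x - 1 / 2 * (((τ : ℝ) - 1) / ((n : ℝ) - 1)) * quadL (G Finset.univ *ᵥ gradH x) := by
  intro eI c v G Psets p H gradH quadL
  have hLinv : ∀ i ∈ (univ : Finset (Fin n)), 0 < (L⁻¹) i := fun i _ => inv_pos.2 (hL i)
  have hτn' : τ ≤ #(univ : Finset (Fin n)) := by rwa [card_univ, Fintype.card_fin]
  have hmass : 0 < ∑ J ∈ Psets, c J := sum_powersetCard_sum_pos hLinv (by omega) hτn'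
  have hp : ∑ I ∈ Psets, p I = 1 := by rw [← sum_div, div_self hmass.ne']
  have hdesc : ∀ I, H (x - G I *ᵥ gradH x) ≤ H x - 1 / 2 * weightedSqDev L⁻¹ (gradH x) I :=
    sum_sub_projMatrix_mulVec_le hL hsmooth x
  have hexp : ∑ I ∈ Psets, p I * weightedSqDev L⁻¹ (gradH x) I
      = ((τ : ℝ) - 1) / ((n : ℝ) - 1) * weightedSqDev L⁻¹ (gradH x) univ := by
    simpa using sum_powersetCard_div_mul_weightedSqDev hLinv hτ hτn' (gradH x)
  have hquad : quadL (G univ *ᵥ gradH x) = weightedSqDev L⁻¹ (gradH x) univ :=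
    quadForm_projMatrix_mulVec fun i _ => (hL i).ne'
  calc ∑ I ∈ Psets, p I * H (x - G I *ᵥ gradH x)
      ≤ ∑ I ∈ Psets, p I * (H x - 1 / 2 * weightedSqDev L⁻¹ (gradH x) I) :=
        sum_le_sum fun I _ => mul_le_mul_of_nonneg_left (hdesc I)
          (div_nonneg (sum_nonneg fun i _ => (hLinv i (mem_univ i)).le) hmass.le)
    _ = (∑ I ∈ Psets, p I) * H x - 1 / 2 * ∑ I ∈ Psets, p I * weightedSqDev L⁻¹ (gradH x) I := by
        rw [sum_mul, mul_sum, ← sum_sub_distrib]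
        exact sum_congr rfl fun I _ => by ring
    _ = _ := by rw [hp, hexp, hquad]; ring

/-- Descent lemma for projected coordinate descent: for separable h with
L_i-smooth components, feasible x and y = x − G_I ∇h(x) with I sampled with
probability ∝ e_Iᵀ L⁻¹ e_I among size-τ subsets,
`𝔼_I[h(y)] ≤ h(x) − (1/2)((τ−1)/(n−1)) ‖G_{[n]} ∇h(x)‖²_L`. -/
theorem stmt11 {n : ℕ} (τ : ℕ) (hτ : 2 ≤ τ) (hτn : τ ≤ n)
    (L : Fin n → ℝ) (hL : ∀ i, 0 < L i)
    (h : Fin n → ℝ → ℝ) (g : Fin n → ℝ → ℝ)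
    (hderiv : ∀ i x, HasDerivAt (h i) (g i x) x)
    (hsmooth : ∀ i x y, h i x ≤ h i y + g i y * (x - y) + L i / 2 * (x - y) ^ 2)
    (x : Fin n → ℝ) (hx : ∑ i, x i = 0) :
    let eI : Finset (Fin n) → (Fin n → ℝ) := fun I i => if i ∈ I then 1 else 0
    let c : Finset (Fin n) → ℝ := fun I => ∑ i ∈ I, (L i)⁻¹
    let v : Finset (Fin n) → (Fin n → ℝ) := fun I i => (L i)⁻¹ * eI I i
    let G : Finset (Fin n) → Matrix (Fin n) (Fin n) ℝ := fun I =>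
      Matrix.diagonal (fun i => eI I i * (L i)⁻¹) -
        (c I)⁻¹ • Matrix.vecMulVec (v I) (v I)
    let Psets := Finset.powersetCard τ (Finset.univ : Finset (Fin n))
    let p : Finset (Fin n) → ℝ := fun I => c I / ∑ J ∈ Psets, c J
    let H : (Fin n → ℝ) → ℝ := fun z => ∑ i, h i (z i)
    let gradH : (Fin n → ℝ) → (Fin n → ℝ) := fun z j => g j (z j)
    let quadL : (Fin n → ℝ) → ℝ := fun w => w ⬝ᵥ (Matrix.diagonal L *ᵥ w)
    ∑ I ∈ Psets, p I * H (x - G I *ᵥ gradH x)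
      ≤ H x - 1 / 2 * (((τ : ℝ) - 1) / ((n : ℝ) - 1)) * quadL (G Finset.univ *ᵥ gradH x) :=
  stmt11_general τ hτ hτn L hL h g hsmooth x
end

section
/- Let r ∈ (0,1], κ ∈ (0,1], a = √κ / (1/r + √κ), and b = κ a r². Then a² ≤ (1 − a)(a² + b). -/
/-! With `t = √κ · r` one has `a = t / (1 + t)`, `1 - a = 1 / (1 + t)` and `b = t² a`, so after
dividing by `a / (1 + t)` the inequality becomes `a t ≤ t²`, i.e. `t² / (1 + t) ≤ t²`. -/

theorem sq_div_one_add_le (t : ℝ) (ht : 0 ≤ t) :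
    (t / (1 + t)) ^ 2 ≤ (1 - t / (1 + t)) * ((t / (1 + t)) ^ 2 + t ^ 2 * (t / (1 + t))) := by
  rw [div_pow, div_le_iff₀ (by positivity)]
  field_simp
  ring_nf
  linarith [pow_nonneg ht 4]

theorem stmt16_general (r κ : ℝ) (hr0 : 0 < r) (hκ0 : 0 < κ) :
    let a : ℝ := Real.sqrt κ / (1 / r + Real.sqrt κ)
    let b : ℝ := κ * a * r ^ 2
    a ^ 2 ≤ (1 - a) * (a ^ 2 + b) := by
  intro a b
  have ha : a = √κ * r / (1 + √κ * r) := by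
    simp only [a]
    field_simp
  have hb : b = (√κ * r) ^ 2 * a := by
    simp only [b]
    rw [mul_pow, Real.sq_sqrt hκ0.le]
    ring
  rw [hb, ha]
  exact sq_div_one_add_le _ (by positivity)

/-- Scalar parameter inequality for accelerated RBCD: with
`a = √κ / (1/r + √κ)` and `b = κ a r²`, one has `a² ≤ (1 − a)(a² + b)`. -/
theorem stmt16 (r κ : ℝ) (hr0 : 0 < r) (hr1 : r ≤ 1) (hκ0 : 0 < κ) (hκ1 : κ ≤ 1) :
    let a : ℝ := Real.sqrt κ / (1 / r + Real.sqrt κ)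
    let b : ℝ := κ * a * r ^ 2
    a ^ 2 ≤ (1 - a) * (a ^ 2 + b) :=
  stmt16_general r κ hr0 hκ0
end

section
/- Primal–dual error transfer: let f_1,…,f_N : ℝ^d → ℝ be α-strongly convex and differentiable, let G(y) = Σ_i f_i*(y_i) be the dual objective on the constraint Σ_i y_i = 0, with dual optimum y* and primal optimum w* = ∇f_i*(y_i*) for every i. Suppose y^{(t)} is feasible (Σ_i y_i^{(t)} = 0), w_i^{(t)} = ∇f_i*(y_i^{(t)}), and ŵ^{(t)} is chosen uniformly at random from {w_1^{(t)},…,w_N^{(t)}}. Then 𝔼[‖ŵ^{(t)} − w*‖²] ≤ (2/(Nα)) (G(y^{(t)}) − G(y*)). -/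
open BigOperators Finset
open scoped RealInnerProductSpace

/-!
If `f` is `α`-strongly convex with gradient `g`, the supremum defining `f*(g v)` is attained at `v`,
so `f*(g v) = ⟪g v, v⟫ - f v`. Subtracting two such identities and applying strong convexity once
more gives `f*(g u) - f*(g v) ≥ ⟪g u - g v, v⟫ + α/2 ‖u - v‖²`. Summing over `i` with `v = w*`,
`u = wᵢ`, the linear terms add up to `⟪∑ᵢ (yᵢ - yᵢ*), w*⟫ = 0` because both dual points are feasible.
-/

noncomputable def convexConjugate {E : Type*} [NormedAddCommGroup E] [InnerProductSpace ℝ E]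
    (f : E → ℝ) (y : E) : ℝ :=
  ⨆ w : E, (⟪y, w⟫ - f w)

section StronglyConvex

variable {E : Type*} [NormedAddCommGroup E] [InnerProductSpace ℝ E]
  {f : E → ℝ} {g : E → E} {α : ℝ}

theorem inner_sub_le_of_strongly_convex (hα : 0 ≤ α)
    (hsc : ∀ w v, f v + ⟪g v, w - v⟫ + α / 2 * ‖w - v‖ ^ 2 ≤ f w) (v w : E) :
    ⟪g v, w⟫ - f w ≤ ⟪g v, v⟫ - f v := by
  have hquad : 0 ≤ α / 2 * ‖w - v‖ ^ 2 := by positivity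
  have := hsc w v
  rw [inner_sub_right] at this
  linarith

theorem convexConjugate_apply_gradient (hα : 0 ≤ α)
    (hsc : ∀ w v, f v + ⟪g v, w - v⟫ + α / 2 * ‖w - v‖ ^ 2 ≤ f w) (v : E) :
    convexConjugate f (g v) = ⟪g v, v⟫ - f v :=
  le_antisymm (ciSup_le (inner_sub_le_of_strongly_convex hα hsc v))
    (le_ciSup ⟨_, Set.forall_mem_range.2 (inner_sub_le_of_strongly_convex hα hsc v)⟩ v)

theorem convexConjugate_sub_ge_of_strongly_convex (hα : 0 ≤ α)
    (hsc : ∀ w v, f v + ⟪g v, w - v⟫ + α / 2 * ‖w - v‖ ^ 2 ≤ f w) (u v : E) :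
    ⟪g u - g v, v⟫ + α / 2 * ‖u - v‖ ^ 2 ≤ convexConjugate f (g u) - convexConjugate f (g v) := by
  rw [convexConjugate_apply_gradient hα hsc, convexConjugate_apply_gradient hα hsc]
  have := hsc v u
  rw [inner_sub_right, norm_sub_rev] at this
  rw [inner_sub_left]
  linarith

end StronglyConvex

theorem stmt18_general {d N : ℕ} (α : ℝ) (hα : 0 < α)
    (f : Fin N → EuclideanSpace ℝ (Fin d) → ℝ)
    (gf : Fin N → EuclideanSpace ℝ (Fin d) → EuclideanSpace ℝ (Fin d))
    (hsc : ∀ i w v, f i v + ⟪gf i v, w - v⟫ + α / 2 * ‖w - v‖ ^ 2 ≤ f i w)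
    (fstar : Fin N → EuclideanSpace ℝ (Fin d) → ℝ)
    (hfstar : ∀ i y, fstar i y = ⨆ w : EuclideanSpace ℝ (Fin d), (⟪y, w⟫ - f i w))
    (G : (Fin N → EuclideanSpace ℝ (Fin d)) → ℝ)
    (hG : ∀ y, G y = ∑ i, fstar i (y i))
    (ystar : Fin N → EuclideanSpace ℝ (Fin d))
    (hystarfeas : ∑ i, ystar i = 0)
    (wstar : EuclideanSpace ℝ (Fin d))
    (hwstar : ∀ i, gf i wstar = ystar i)
    (yt : Fin N → EuclideanSpace ℝ (Fin d)) (hyt : ∑ i, yt i = 0)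
    (w : Fin N → EuclideanSpace ℝ (Fin d))
    (hw : ∀ i, gf i (w i) = yt i) :
    (1 / (N : ℝ)) * ∑ i, ‖w i - wstar‖ ^ 2 ≤ 2 / ((N : ℝ) * α) * (G yt - G ystar) := by
  have hlinear : ∑ i, ⟪yt i - ystar i, wstar⟫ = 0 := by
    rw [← sum_inner, sum_sub_distrib, hyt, hystarfeas, sub_zero, inner_zero_left]
  have hgap : α / 2 * ∑ i, ‖w i - wstar‖ ^ 2 ≤ G yt - G ystar :=
    calc α / 2 * ∑ i, ‖w i - wstar‖ ^ 2
        = ∑ i, (⟪yt i - ystar i, wstar⟫ + α / 2 * ‖w i - wstar‖ ^ 2) := by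
          rw [sum_add_distrib, hlinear, zero_add, mul_sum]
      _ ≤ ∑ i, (fstar i (yt i) - fstar i (ystar i)) := sum_le_sum fun i _ => by
          simpa only [convexConjugate, hw, hwstar, ← hfstar] using
            convexConjugate_sub_ge_of_strongly_convex hα.le (hsc i) (w i) wstar
      _ = G yt - G ystar := by rw [hG, hG, sum_sub_distrib]
  calc (1 / (N : ℝ)) * ∑ i, ‖w i - wstar‖ ^ 2
      = 2 / ((N : ℝ) * α) * (α / 2 * ∑ i, ‖w i - wstar‖ ^ 2) := by
        field_simp
    _ ≤ 2 / ((N : ℝ) * α) * (G yt - G ystar) := by gcongr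

/-- Primal–dual error transfer: with α-strongly convex f_i, dual objective
G(y) = ∑ f_i*(y_i) over the constraint ∑ y_i = 0, dual optimum y*, primal
optimum w* = ∇f_i*(y_i*) (i.e. ∇f_i(w*) = y_i*), feasible y^{(t)} and
w_i = ∇f_i*(y_i^{(t)}) (i.e. ∇f_i(w_i) = y_i^{(t)}), the uniformly random
choice ŵ among the w_i satisfies
`𝔼‖ŵ − w*‖² ≤ (2/(Nα))(G(y^{(t)}) − G(y*))`. -/
theorem stmt18 {d N : ℕ} (hN : 0 < N) (α : ℝ) (hα : 0 < α)
    (f : Fin N → EuclideanSpace ℝ (Fin d) → ℝ)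
    (gf : Fin N → EuclideanSpace ℝ (Fin d) → EuclideanSpace ℝ (Fin d))
    (hdiff : ∀ i w, HasGradientAt (f i) (gf i w) w)
    (hsc : ∀ i w v, f i v + ⟪gf i v, w - v⟫ + α / 2 * ‖w - v‖ ^ 2 ≤ f i w)
    (fstar : Fin N → EuclideanSpace ℝ (Fin d) → ℝ)
    (hfstar : ∀ i y, fstar i y = ⨆ w : EuclideanSpace ℝ (Fin d), (⟪y, w⟫ - f i w))
    (G : (Fin N → EuclideanSpace ℝ (Fin d)) → ℝ)
    (hG : ∀ y, G y = ∑ i, fstar i (y i))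
    (ystar : Fin N → EuclideanSpace ℝ (Fin d))
    (hystarfeas : ∑ i, ystar i = 0)
    (hystaropt : ∀ y : Fin N → EuclideanSpace ℝ (Fin d), (∑ i, y i = 0) → G ystar ≤ G y)
    (wstar : EuclideanSpace ℝ (Fin d))
    (hwstar : ∀ i, gf i wstar = ystar i)
    (yt : Fin N → EuclideanSpace ℝ (Fin d)) (hyt : ∑ i, yt i = 0)
    (w : Fin N → EuclideanSpace ℝ (Fin d))
    (hw : ∀ i, gf i (w i) = yt i) :
    (1 / (N : ℝ)) * ∑ i, ‖w i - wstar‖ ^ 2 ≤ 2 / ((N : ℝ) * α) * (G yt - G ystar) :=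
  stmt18_general α hα f gf hsc fstar hfstar G hG ystar hystarfeas wstar hwstar yt hyt w hw
end
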